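/- arXiv:0911.3813 — 2 statements merged into one kernel-verified Lean document; each statement's English description precedes it below -/
import Mathlib

section
/- Let n, q ≥ 1 and s ∈ ℝ, let κ be the group action on H^s(ℝ^n) given by (κ_λ v)(x) := λ^{n/2} v(λx), and for u ∈ 𝒮(ℝ^{q+n}, ℂ) let (F_{y→η}u)(η, ·) denote the partial Fourier transform in the first q variables. Then for every u ∈ 𝒮(ℝ^{q+n}): ∫_{ℝ^q} ⟨η⟩^{2s} ‖κ_{⟨η⟩}^{−1} (F_{y→η}u)(η, ·)‖²_{H^s(ℝ^n)} dη = ∫_{ℝ^q} ∫_{ℝ^n} (1+|η|²+|ξ|²)^s |(Fu)(η,ξ)|² dξ dη, i.e. the 𝒲^s(ℝ^q, H^s(ℝ^n))-norm of u equals its H^s(ℝ^{q+n})-norm, so that 𝒲^s(ℝ^q, H^s(ℝ^n)) = H^s(ℝ^q × ℝ^n). -/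
/-! For fixed `η` put `λ = ⟨η⟩` and `v = (F_{y→η}u)(η, ·)`. The Fourier transform of
`κ_λ⁻¹ v` is `λ^{n/2} v̂(λ ·)`, so the substitution `ζ = λξ` turns
`∫ ⟨ξ⟩^{2s} |(κ_λ⁻¹ v)^(ξ)|² dξ` into `∫ ⟨ζ/λ⟩^{2s} |v̂(ζ)|² dζ`. By Fubini `v̂ = (Fu)(η, ·)`,
and `⟨η⟩^{2s} ⟨ζ/⟨η⟩⟩^{2s} = (1 + |η|² + |ζ|²)^s`. -/

open MeasureTheory Complex
open scoped ENNReal NNReal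

noncomputable section

/-- `ℝ^m` as a Euclidean space. -/
abbrev Eucl (m : ℕ) := EuclideanSpace ℝ (Fin m)

/-- The "Japanese bracket" `⟨η⟩ = (1+|η|²)^(1/2)`. -/
def jap {m : ℕ} (η : Eucl m) : ℝ := Real.sqrt (1 + ‖η‖ ^ 2)

/-- Partial Fourier transform in the first group of variables:
`(F_{y→η}u)(η, x) = ∫ e^{−i y·η} u(y, x) dy`. -/
def partialFT {q n : ℕ} (u : Eucl q × Eucl n → ℂ) (η : Eucl q) (x : Eucl n) : ℂ :=
  ∫ y, Complex.exp (-Complex.I * ((inner ℝ y η : ℝ) : ℂ)) * u (y, x)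

/-- The Fourier transform on `ℝ^n`: `v̂(ξ) = ∫ e^{−i x·ξ} v(x) dx`. -/
def ftn {n : ℕ} (v : Eucl n → ℂ) (ξ : Eucl n) : ℂ :=
  ∫ x, Complex.exp (-Complex.I * ((inner ℝ x ξ : ℝ) : ℂ)) * v x

/-- The full Fourier transform on `ℝ^q × ℝ^n`. -/
def fullFT {q n : ℕ} (u : Eucl q × Eucl n → ℂ) (η : Eucl q) (ξ : Eucl n) : ℂ :=
  ∫ w : Eucl q × Eucl n,
    Complex.exp (-Complex.I * (((inner ℝ w.1 η : ℝ) + (inner ℝ w.2 ξ : ℝ) : ℝ) : ℂ)) * u w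

instance instIsAddHaarMeasureVolumeProd {q n : ℕ} :
    (volume : Measure (Eucl q × Eucl n)).IsAddHaarMeasure :=
  Measure.volume_eq_prod (Eucl q) (Eucl n) ▸ Measure.prod.instIsAddHaarMeasure _ _

theorem lintegral_comp_smul {E : Type*} [NormedAddCommGroup E] [NormedSpace ℝ E]
    [MeasurableSpace E] [BorelSpace E] [FiniteDimensional ℝ E] (μ : Measure E)
    [μ.IsAddHaarMeasure] (f : E → ℝ≥0∞) {R : ℝ} (hR : R ≠ 0) :
    ∫⁻ x, f (R • x) ∂μ = ENNReal.ofReal |(R ^ Module.finrank ℝ E)⁻¹| * ∫⁻ x, f x ∂μ := by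
  let e := (Homeomorph.smulOfNeZero (α := E) R hR).toMeasurableEquiv
  calc ∫⁻ x, f (R • x) ∂μ = ∫⁻ x, f x ∂μ.map e := (lintegral_map_equiv f e).symm
    _ = _ := by
      rw [show ⇑e = fun x => R • x from rfl, Measure.map_addHaar_smul μ hR,
        lintegral_smul_measure, smul_eq_mul]

theorem norm_exp_neg_I_mul_ofReal (r : ℝ) : ‖Complex.exp (-Complex.I * r)‖ = 1 := by
  simpa [mul_comm] using Complex.norm_exp_ofReal_mul_I (-r)

theorem fullFT_eq_ftn_partialFT {q n : ℕ} {u : Eucl q × Eucl n → ℂ} (hu : Integrable u)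
    (η : Eucl q) (ξ : Eucl n) :
    fullFT u η ξ = ftn (partialFT u η) ξ := by
  have hphase : Continuous fun w : Eucl q × Eucl n =>
      Complex.exp (-Complex.I * (((inner ℝ w.1 η : ℝ) + (inner ℝ w.2 ξ : ℝ) : ℝ) : ℂ)) := by
    fun_prop
  have hint := hu.bdd_mul hphase.aestronglyMeasurable
    (Filter.Eventually.of_forall fun w => (norm_exp_neg_I_mul_ofReal _).le)
  rw [Measure.volume_eq_prod] at hint
  rw [fullFT, Measure.volume_eq_prod, integral_prod_symm _ hint]
  refine integral_congr_ae (Filter.Eventually.of_forall fun x => ?_)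
  dsimp only
  rw [partialFT, ← integral_const_mul]
  refine integral_congr_ae (Filter.Eventually.of_forall fun y => ?_)
  simp only [Complex.ofReal_add, mul_add, Complex.exp_add, ← mul_assoc, mul_comm]

theorem ftn_comp_inv_smul {n : ℕ} (v : Eucl n → ℂ) (c : ℝ) {lam : ℝ} (hlam : 0 < lam)
    (ξ : Eucl n) :
    ftn (fun x => c • v (lam⁻¹ • x)) ξ = (c * lam ^ n) • ftn v (lam • ξ) := by
  have hphase : ∀ x : Eucl n, inner ℝ x ξ = inner ℝ (lam⁻¹ • x) (lam • ξ) := fun x => by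
    rw [real_inner_smul_left, real_inner_smul_right, ← mul_assoc,
      inv_mul_cancel₀ hlam.ne', one_mul]
  simp only [ftn, hphase, mul_smul_comm, integral_smul]
  rw [Measure.integral_comp_inv_smul_of_nonneg volume
      (fun z => Complex.exp (-Complex.I * ((inner ℝ z (lam • ξ) : ℝ) : ℂ)) * v z) hlam.le,
    finrank_euclideanSpace_fin,
    smul_smul]

theorem ftn_dilate {n : ℕ} (v : Eucl n → ℂ) {lam : ℝ} (hlam : 0 < lam) (ξ : Eucl n) :
    ftn (fun x => (lam ^ (-(n : ℝ) / 2) : ℝ) • v (lam⁻¹ • x)) ξ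
      = (lam ^ ((n : ℝ) / 2) : ℝ) • ftn v (lam • ξ) := by
  rw [ftn_comp_inv_smul v _ hlam, ← Real.rpow_natCast, ← Real.rpow_add hlam]
  ring_nf

theorem lintegral_mul_ftn_dilate_sq {n : ℕ} (w : Eucl n → ℝ≥0∞) (v : Eucl n → ℂ) {lam : ℝ}
    (hlam : 0 < lam) :
    ∫⁻ ξ, w ξ * (‖ftn (fun x => (lam ^ (-(n : ℝ) / 2) : ℝ) • v (lam⁻¹ • x)) ξ‖₊ : ℝ≥0∞) ^ 2
      = ∫⁻ ζ, w (lam⁻¹ • ζ) * (‖ftn v ζ‖₊ : ℝ≥0∞) ^ 2 := by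
  have hsq : ∀ ξ, (‖ftn (fun x => (lam ^ (-(n : ℝ) / 2) : ℝ) • v (lam⁻¹ • x)) ξ‖₊ : ℝ≥0∞) ^ 2
      = ENNReal.ofReal (lam ^ n) * (‖ftn v (lam • ξ)‖₊ : ℝ≥0∞) ^ 2 := fun ξ => by
    have hpos : 0 ≤ lam ^ ((n : ℝ) / 2) := Real.rpow_nonneg hlam.le _
    rw [ftn_dilate v hlam, nnnorm_smul, ENNReal.coe_mul, mul_pow, ← enorm_eq_nnnorm,
      Real.enorm_eq_ofReal hpos, ← ENNReal.ofReal_pow hpos, ← Real.rpow_natCast _ 2,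
      ← Real.rpow_mul hlam.le]
    norm_num
  calc _ = ∫⁻ ξ, ENNReal.ofReal (lam ^ n) *
        (w (lam⁻¹ • lam • ξ) * (‖ftn v (lam • ξ)‖₊ : ℝ≥0∞) ^ 2) := by
        refine lintegral_congr fun ξ => ?_
        rw [hsq, smul_smul, inv_mul_cancel₀ hlam.ne', one_smul, mul_left_comm]
    _ = ENNReal.ofReal (lam ^ n) * (ENNReal.ofReal |(lam ^ n)⁻¹| *
        ∫⁻ ζ, w (lam⁻¹ • ζ) * (‖ftn v ζ‖₊ : ℝ≥0∞) ^ 2) := by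
        rw [lintegral_const_mul' _ _ ENNReal.ofReal_ne_top,
          lintegral_comp_smul volume (fun ζ => w (lam⁻¹ • ζ) * (‖ftn v ζ‖₊ : ℝ≥0∞) ^ 2)
            hlam.ne', finrank_euclideanSpace_fin]
    _ = _ := by
        have hpow : 0 < lam ^ n := pow_pos hlam n
        rw [← mul_assoc, abs_of_pos (inv_pos.2 hpow), ← ENNReal.ofReal_mul hpow.le,
          mul_inv_cancel₀ hpow.ne', ENNReal.ofReal_one, one_mul]

theorem jap_pos {m : ℕ} (η : Eucl m) : 0 < jap η :=
  Real.sqrt_pos.2 (by positivity)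

theorem jap_rpow_two_mul {m : ℕ} (η : Eucl m) (s : ℝ) : jap η ^ (2 * s) = (1 + ‖η‖ ^ 2) ^ s := by
  rw [jap, Real.sqrt_eq_rpow, ← Real.rpow_mul (by positivity)]
  ring_nf

theorem jap_rpow_mul_jap_inv_smul_rpow {q n : ℕ} (η : Eucl q) (ζ : Eucl n) (s : ℝ) :
    jap η ^ (2 * s) * jap ((jap η)⁻¹ • ζ) ^ (2 * s) = (1 + ‖η‖ ^ 2 + ‖ζ‖ ^ 2) ^ s := by
  have hζ : ‖(jap η)⁻¹ • ζ‖ ^ 2 = ‖ζ‖ ^ 2 / (1 + ‖η‖ ^ 2) := by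
    rw [norm_smul, mul_pow, norm_inv, Real.norm_of_nonneg (jap_pos η).le, inv_pow, jap,
      Real.sq_sqrt (by positivity), inv_mul_eq_div]
  rw [jap_rpow_two_mul, jap_rpow_two_mul, hζ, ← Real.mul_rpow (by positivity) (by positivity)]
  congr 1
  field_simp

theorem stmt7_general {q n : ℕ} (s : ℝ)
    (u : SchwartzMap (Eucl q × Eucl n) ℂ) :
    (∫⁻ η, ENNReal.ofReal (jap η ^ (2 * s)) *
        ∫⁻ ξ, ENNReal.ofReal (jap ξ ^ (2 * s)) *
          ((‖ftn (fun x => (jap η ^ (-(n : ℝ) / 2) : ℝ) •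
              partialFT (⇑u) η ((jap η)⁻¹ • x)) ξ‖₊ : ℝ≥0∞) ^ 2))
      = ∫⁻ η, ∫⁻ ξ,
          ENNReal.ofReal ((1 + ‖η‖ ^ 2 + ‖ξ‖ ^ 2) ^ s) *
            ((‖fullFT (⇑u) η ξ‖₊ : ℝ≥0∞) ^ 2) := by
  refine lintegral_congr fun η => ?_
  rw [lintegral_mul_ftn_dilate_sq (fun ξ => ENNReal.ofReal (jap ξ ^ (2 * s))) _ (jap_pos η),
    ← lintegral_const_mul' _ _ ENNReal.ofReal_ne_top]
  refine lintegral_congr fun ζ => ?_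
  rw [← mul_assoc, ← ENNReal.ofReal_mul (Real.rpow_nonneg (jap_pos η).le _), jap_rpow_mul_jap_inv_smul_rpow,
    fullFT_eq_ftn_partialFT u.integrable]

/-- `𝒲^s(ℝ^q, H^s(ℝ^n)) = H^s(ℝ^q × ℝ^n)`:  with the group action
`(κ_λ v)(x) = λ^{n/2} v(λx)` on `H^s(ℝ^n)` (whose inverse is
`(κ_λ^{-1} v)(x) = λ^{-n/2} v(λ^{-1}x)`), the `𝒲^s(ℝ^q,H^s(ℝ^n))`-norm of a Schwartz
function `u` on `ℝ^q × ℝ^n` — computed via the `H^s(ℝ^n)`-norm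
`‖v‖² = ∫ ⟨ξ⟩^{2s} |v̂(ξ)|² dξ` — equals its `H^s(ℝ^{q+n})`-norm
`∫∫ (1+|η|²+|ξ|²)^s |(Fu)(η,ξ)|² dξ dη`. -/
theorem stmt7 {q n : ℕ} (hq : 1 ≤ q) (hn : 1 ≤ n) (s : ℝ)
    (u : SchwartzMap (Eucl q × Eucl n) ℂ) :
    (∫⁻ η, ENNReal.ofReal (jap η ^ (2 * s)) *
        ∫⁻ ξ, ENNReal.ofReal (jap ξ ^ (2 * s)) *
          ((‖ftn (fun x => (jap η ^ (-(n : ℝ) / 2) : ℝ) •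
              partialFT (⇑u) η ((jap η)⁻¹ • x)) ξ‖₊ : ℝ≥0∞) ^ 2))
      = ∫⁻ η, ∫⁻ ξ,
          ENNReal.ofReal ((1 + ‖η‖ ^ 2 + ‖ξ‖ ^ 2) ^ s) *
            ((‖fullFT (⇑u) η ξ‖₊ : ℝ≥0∞) ^ 2) :=
  stmt7_general s u
end
end

section
/- Let P ⊆ ℂ and f : ℂ ∖ P → ℂ be a (scalar) smoothing Mellin symbol with asymptotic type P, i.e.: P is closed, P ∩ {z : c ≤ Re z ≤ c'} is finite for all reals c ≤ c'; f is holomorphic on ℂ ∖ P and at every point of P it has at worst a pole (f is meromorphic on ℂ); and for all reals c ≤ c' and every N ∈ ℕ there exist C, T > 0 such that |f(z)| ≤ C·(1+|Im z|)^{−N} whenever c ≤ Re z ≤ c' and |Im z| ≥ T. Then there exist a set Q ⊆ ℂ and a function l : ℂ ∖ Q → ℂ which is a smoothing Mellin symbol with asymptotic type Q (satisfying the same three conditions, with Q in place of P), such that (1 + f(z)) · (1 + l(z)) = 1 for all z ∈ ℂ ∖ (P ∪ Q). -/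
open Complex

noncomputable section

/-- A Mellin asymptotic type: a closed subset of `ℂ` meeting each strip
`{c ≤ Re z ≤ c'}` in a finite set. -/
def MellinAsympType (P : Set ℂ) : Prop :=
  IsClosed P ∧ ∀ c c' : ℝ, (P ∩ {z : ℂ | c ≤ z.re ∧ z.re ≤ c'}).Finite

/-- A (scalar) smoothing Mellin symbol with asymptotic type `P`: a function holomorphic on
`ℂ ∖ P`, meromorphic on `ℂ` (at worst poles at the points of `P`), which decays faster than
any power of `(1+|Im z|)⁻¹` as `|Im z| → ∞`, uniformly on strips of finite width. -/
def SmoothingMellinSymbol (P : Set ℂ) (f : ℂ → ℂ) : Prop :=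
  MellinAsympType P ∧
  DifferentiableOn ℂ f Pᶜ ∧
  (∀ p ∈ P, MeromorphicAt f p) ∧
  ∀ c c' : ℝ, c ≤ c' → ∀ N : ℕ, ∃ C > (0 : ℝ), ∃ T > (0 : ℝ), ∀ z : ℂ,
    c ≤ z.re → z.re ≤ c' → T ≤ |z.im| →
      ‖f z‖ ≤ C * (1 + |z.im|) ^ (-(N : ℝ))

/-!
Put `g = 1 + f` and `l = g⁻¹ - 1 = -f / g`. Rapid decay gives `‖f‖ ≤ 1/2` high up in
every strip, so there `g` has no zeros and `‖l‖ ≤ 2‖f‖`, which makes `l` rapidly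
decreasing. Being meromorphic on `ℂ` and not locally zero, `g` has nonzero order only on a
closed discrete set; in a strip that set lies in a compact box, hence is finite. Adding it
to `P` gives the asymptotic type of `l`.
-/

open Filter

section OrderOfMeromorphic

variable {𝕜 : Type*} [NontriviallyNormedField 𝕜] {E : Type*} [NormedAddCommGroup E]
  [NormedSpace 𝕜 E] {f : 𝕜 → E}

lemma AnalyticAt.meromorphicOrderAt_eq_zero_iff {x : 𝕜} (hf : AnalyticAt 𝕜 f x) :
    meromorphicOrderAt f x = 0 ↔ f x ≠ 0 := by
  simp [hf.meromorphicOrderAt_eq, ← hf.analyticOrderAt_eq_zero]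

lemma Meromorphic.setOf_meromorphicOrderAt_eq_zero_mem_codiscrete (hf : Meromorphic f)
    (h : ∀ u, meromorphicOrderAt f u ≠ ⊤) :
    {u | meromorphicOrderAt f u = 0} ∈ codiscrete 𝕜 :=
  mem_of_superset
    ((meromorphicOn_univ.2 hf).codiscreteWithin_setOfPred_meromorphicOrderAt_eq_zero_or_top
      fun u _ ↦ h u)
    fun u hu ↦ hu.2.resolve_right (h u)

lemma Meromorphic.isClosed_setOf_meromorphicOrderAt_ne_zero (hf : Meromorphic f)
    (h : ∀ u, meromorphicOrderAt f u ≠ ⊤) :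
    IsClosed {u | meromorphicOrderAt f u ≠ 0} :=
  (compl_mem_codiscrete_iff.1 <| by
    simpa only [Set.compl_ofPred, not_not] using
      hf.setOf_meromorphicOrderAt_eq_zero_mem_codiscrete h).1

lemma Meromorphic.finite_inter_setOf_meromorphicOrderAt_ne_zero (hf : Meromorphic f)
    (h : ∀ u, meromorphicOrderAt f u ≠ ⊤) {K : Set 𝕜} (hK : IsCompact K) :
    (K ∩ {u | meromorphicOrderAt f u ≠ 0}).Finite :=
  hK.finite_sdiff_of_mem_codiscreteWithin <| codiscreteWithin_mono K.subset_univ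
    (hf.setOf_meromorphicOrderAt_eq_zero_mem_codiscrete h)

end OrderOfMeromorphic

lemma one_add_ne_zero_of_norm_lt_one {𝕜 : Type*} [NormedRing 𝕜] [NormOneClass 𝕜] {w : 𝕜}
    (hw : ‖w‖ < 1) : 1 + w ≠ 0 := by
  intro h
  rw [add_eq_zero_iff_neg_eq.1 h |>.symm, norm_neg, norm_one] at hw
  exact lt_irrefl _ hw

lemma norm_inv_one_add_sub_one_le {𝕜 : Type*} [NormedField 𝕜] {w : 𝕜} (hw : ‖w‖ ≤ 1 / 2) :
    ‖(1 + w)⁻¹ - 1‖ ≤ 2 * ‖w‖ := by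
  have hw' : 1 + w ≠ 0 := one_add_ne_zero_of_norm_lt_one (by linarith)
  have hlow : 1 / 2 ≤ ‖1 + w‖ := by
    have := norm_sub_norm_le (1 : 𝕜) (-w)
    rw [sub_neg_eq_add, norm_one, norm_neg] at this
    linarith
  calc ‖(1 + w)⁻¹ - 1‖ = ‖-w / (1 + w)‖ := by
        congr 1
        field_simp
        ring
    _ = ‖w‖ / ‖1 + w‖ := by rw [norm_div, norm_neg]
    _ ≤ ‖w‖ / (1 / 2) := div_le_div_of_nonneg_left (norm_nonneg _) (by norm_num) hlow
    _ = 2 * ‖w‖ := by ring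

def RapidDecayOnStrips (f : ℂ → ℂ) : Prop :=
  ∀ c c' : ℝ, c ≤ c' → ∀ N : ℕ, ∃ C > (0 : ℝ), ∃ T > (0 : ℝ), ∀ z : ℂ,
    c ≤ z.re → z.re ≤ c' → T ≤ |z.im| →
      ‖f z‖ ≤ C * (1 + |z.im|) ^ (-(N : ℝ))

namespace RapidDecayOnStrips

variable {f : ℂ → ℂ}

lemma exists_norm_le (hf : RapidDecayOnStrips f) {c c' : ℝ} (hcc : c ≤ c') {ε : ℝ}
    (hε : 0 < ε) : ∃ T, ∀ z : ℂ, c ≤ z.re → z.re ≤ c' → T ≤ |z.im| → ‖f z‖ ≤ ε := by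
  obtain ⟨C, -, T, -, hbound⟩ := hf c c' hcc 1
  refine ⟨max T (C / ε), fun z h1 h2 h3 ↦ ?_⟩
  have hCε : C ≤ ε * |z.im| := (div_le_iff₀' hε).1 (le_of_max_le_right h3)
  calc ‖f z‖ ≤ C * (1 + |z.im|)⁻¹ := by
        simpa [Real.rpow_neg_one] using hbound z h1 h2 (le_of_max_le_left h3)
    _ ≤ ε := by
        rw [← div_eq_mul_inv, div_le_iff₀ (by positivity)]
        linarith

lemma inv_one_add_sub_one (hf : RapidDecayOnStrips f) : RapidDecayOnStrips ((1 + f)⁻¹ - 1) := by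
  intro c c' hcc N
  obtain ⟨C, hC, T, hT, hbound⟩ := hf c c' hcc N
  obtain ⟨T', hT'⟩ := hf.exists_norm_le hcc one_half_pos
  refine ⟨2 * C, by positivity, max T T', lt_max_of_lt_left hT, fun z h1 h2 h3 ↦ ?_⟩
  calc ‖((1 + f)⁻¹ - 1) z‖ ≤ 2 * ‖f z‖ :=
        norm_inv_one_add_sub_one_le (hT' z h1 h2 (le_of_max_le_right h3))
    _ ≤ 2 * C * (1 + |z.im|) ^ (-(N : ℝ)) := by
        rw [mul_assoc]
        gcongr
        exact hbound z h1 h2 (le_of_max_le_left h3)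

end RapidDecayOnStrips

lemma MellinAsympType.exists_notMem {P : Set ℂ} (hP : MellinAsympType P) (T : ℝ) :
    ∃ z ∉ P, z.re = 0 ∧ T ≤ z.im := by
  have hinj : Set.InjOn (fun t : ℝ ↦ (t * I : ℂ)) (Set.Ici T) := fun s _ t _ h ↦ by
    simpa using congrArg Complex.im h
  obtain ⟨_, ⟨t, ht, rfl⟩, hnot⟩ :=
    ((Set.Ici_infinite T).image hinj).exists_notMem_finite (hP.2 0 0)
  exact ⟨t * I, fun h ↦ hnot ⟨h, by simp, by simp⟩, by simp, by simpa using ht⟩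

namespace SmoothingMellinSymbol

variable {P : Set ℂ} {f : ℂ → ℂ}

lemma rapidDecayOnStrips (hf : SmoothingMellinSymbol P f) : RapidDecayOnStrips f :=
  hf.2.2.2

lemma analyticAt_one_add (hf : SmoothingMellinSymbol P f) {z : ℂ} (hz : z ∉ P) :
    AnalyticAt ℂ (1 + f) z :=
  ((differentiableOn_const 1).add hf.2.1).analyticAt (hf.1.1.isOpen_compl.mem_nhds hz)

lemma meromorphic_one_add (hf : SmoothingMellinSymbol P f) : Meromorphic (1 + f) := by
  intro z
  by_cases hz : z ∈ P
  · exact (MeromorphicAt.const 1 z).add (hf.2.2.1 z hz)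
  · exact (hf.analyticAt_one_add hz).meromorphicAt

lemma exists_meromorphicOrderAt_one_add_eq_zero (hf : SmoothingMellinSymbol P f) {c c' : ℝ}
    (hcc : c ≤ c') : ∃ T, ∀ z ∉ P, c ≤ z.re → z.re ≤ c' → T ≤ |z.im| →
      meromorphicOrderAt (1 + f) z = 0 := by
  obtain ⟨T, hT⟩ := hf.rapidDecayOnStrips.exists_norm_le hcc one_half_pos
  refine ⟨T, fun z hz h1 h2 h3 ↦ ?_⟩
  exact (hf.analyticAt_one_add hz).meromorphicOrderAt_eq_zero_iff.2
    (one_add_ne_zero_of_norm_lt_one (by linarith [hT z h1 h2 h3]))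

lemma meromorphicOrderAt_one_add_ne_top (hf : SmoothingMellinSymbol P f) (z : ℂ) :
    meromorphicOrderAt (1 + f) z ≠ ⊤ := by
  obtain ⟨T, hT⟩ := hf.exists_meromorphicOrderAt_one_add_eq_zero (le_refl 0)
  obtain ⟨w, hwP, hw0, hwT⟩ := hf.1.exists_notMem T
  refine hf.meromorphic_one_add.exists_meromorphicOrderAt_ne_top_iff_forall.1 ⟨w, ?_⟩ z
  rw [hT w hwP hw0.ge hw0.le (hwT.trans (le_abs_self _))]
  exact WithTop.zero_ne_top

lemma mellinAsympType_union_setOf_meromorphicOrderAt_ne_zero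
    (hf : SmoothingMellinSymbol P f) :
    MellinAsympType (P ∪ {z | meromorphicOrderAt (1 + f) z ≠ 0}) := by
  have hne_top := hf.meromorphicOrderAt_one_add_ne_top
  refine ⟨hf.1.1.union (hf.meromorphic_one_add.isClosed_setOf_meromorphicOrderAt_ne_zero
    hne_top), fun c c' ↦ ?_⟩
  rcases lt_or_ge c' c with hcc | hcc
  · exact Set.finite_empty.subset fun z hz ↦ (hcc.not_ge (hz.2.1.trans hz.2.2)).elim
  obtain ⟨T, hT⟩ := hf.exists_meromorphicOrderAt_one_add_eq_zero hcc
  have hbox : IsCompact (Set.Icc c c' ×ℂ Set.Icc (-T) T) :=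
    isCompact_Icc.reProdIm isCompact_Icc
  refine ((hf.1.2 c c').union
    (hf.meromorphic_one_add.finite_inter_setOf_meromorphicOrderAt_ne_zero hne_top hbox)).subset ?_
  rintro z ⟨hz | hz, hzs⟩
  · exact Or.inl ⟨hz, hzs⟩
  by_cases hzP : z ∈ P
  · exact Or.inl ⟨hzP, hzs⟩
  refine Or.inr ⟨⟨hzs, abs_le.1 ?_⟩, hz⟩
  by_contra! hlt
  exact hz (hT z hzP hzs.1 hzs.2 hlt.le)

lemma one_add_ne_zero (hf : SmoothingMellinSymbol P f) {z : ℂ}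
    (hz : z ∉ P ∪ {z | meromorphicOrderAt (1 + f) z ≠ 0}) : 1 + f z ≠ 0 := by
  simp only [Set.mem_union, Set.mem_ofPred_eq, not_or, not_not] at hz
  exact (hf.analyticAt_one_add hz.1).meromorphicOrderAt_eq_zero_iff.1 hz.2

lemma inv_one_add_sub_one (hf : SmoothingMellinSymbol P f) :
    SmoothingMellinSymbol (P ∪ {z | meromorphicOrderAt (1 + f) z ≠ 0}) ((1 + f)⁻¹ - 1) := by
  refine ⟨hf.mellinAsympType_union_setOf_meromorphicOrderAt_ne_zero, fun z hz ↦ ?_,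
    fun z _ ↦ (hf.meromorphic_one_add z).inv.sub (.const 1 z),
    hf.rapidDecayOnStrips.inv_one_add_sub_one⟩
  have hzP : z ∉ P := fun h ↦ hz (Or.inl h)
  exact (((hf.analyticAt_one_add hzP).differentiableAt.inv
    (hf.one_add_ne_zero hz)).sub_const 1).differentiableWithinAt

end SmoothingMellinSymbol

/-- Inversion of `1 + f` for a smoothing Mellin symbol `f`: there are an asymptotic type `Q`
and a smoothing Mellin symbol `l` of type `Q` with `(1 + f(z))(1 + l(z)) = 1` for all
`z ∉ P ∪ Q`. -/
theorem stmt14 (P : Set ℂ) (f : ℂ → ℂ) (hf : SmoothingMellinSymbol P f) :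
    ∃ (Q : Set ℂ) (l : ℂ → ℂ), SmoothingMellinSymbol Q l ∧
      ∀ z : ℂ, z ∉ P ∪ Q → (1 + f z) * (1 + l z) = 1 := by
  refine ⟨_, _, hf.inv_one_add_sub_one, fun z hz ↦ ?_⟩
  simp only [Pi.sub_apply, Pi.inv_apply, Pi.add_apply, Pi.one_apply, add_sub_cancel]
  exact mul_inv_cancel₀ (hf.one_add_ne_zero fun hQ ↦ hz (Or.inr hQ))
end
end
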